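/- arXiv:2305.15343 — 2 statements merged into one kernel-verified Lean document; each statement's English description precedes it below -/
import Mathlib

section
/- For every j ≥ 1 and m ≥ 0, writing ℓ = Σ_{i=j+1}^{j+m} g_i, the variance of the sum of log-volatilities satisfies Var(h_j + h_{j+m}) = 2σ²(1 + φ^{ℓ})/(1 − φ²). -/
/-!
The log-volatility `x` is an AR(1) process with coefficients `φ ^ g n` whose Gaussian innovations
are scaled so that the variance stays at `s = σ² / (1 - φ²)`: `φ^(2g) s + (1 - φ^(2g)) s = s`.
Since `x 1, …, x n` are measurable with respect to `σ(η 1, …, η n)`, the innovation `η (n + 1)`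
is independent of them, so `Cov(x j, x (n + 1)) = φ ^ g (n + 1) * Cov(x j, x n)` and hence
`Cov(x j, x (j + m)) = φ^ℓ s`. Then `Var(h j + h (j + m)) = s + 2 φ^ℓ s + s`.
-/

open MeasureTheory ProbabilityTheory Real Finset

theorem ProbabilityTheory.iIndepFun.indepFun_of_measurable_iSup_comap
    {Ω ι β γ : Type*} [MeasurableSpace Ω] {P : Measure Ω} {mβ : MeasurableSpace β}
    [MeasurableSpace γ] {η : ι → Ω → β} (hmeas : ∀ i, Measurable (η i)) (hindep : iIndepFun η P)
    {S : Set ι} {i : ι} (hi : i ∉ S) {Y : Ω → γ}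
    (hY : Measurable[⨆ k ∈ S, mβ.comap (η k)] Y) :
    IndepFun Y (η i) P := by
  have hST : Indep (⨆ k ∈ S, mβ.comap (η k)) (⨆ k ∈ ({i} : Set ι), mβ.comap (η k)) P :=
    indep_iSup_of_disjoint (fun k => (hmeas k).comap_le) hindep.iIndep
      (Set.disjoint_singleton_right.2 hi)
  rw [IndepFun_iff_Indep]
  exact indep_of_indep_of_le_right (indep_of_indep_of_le_left hST hY.comap_le)
    (le_biSup (fun k => mβ.comap (η k)) (Set.mem_singleton i))

section GaussianNoise

variable {Ω : Type*} [MeasurableSpace Ω] {P : Measure Ω} {X : Ω → ℝ}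

lemma memLp_two_of_map_eq_gaussianReal (hX : Measurable X) {m : ℝ} {v : NNReal}
    (h : P.map X = gaussianReal m v) : MemLp X 2 P :=
  (h ▸ memLp_id_gaussianReal 2 : MemLp id 2 (P.map X)).comp_of_map hX.aemeasurable

lemma variance_of_map_eq_gaussianReal_toNNReal (hX : Measurable X) {m v : ℝ} (hv : 0 ≤ v)
    (h : P.map X = gaussianReal m v.toNNReal) : Var[X; P] = v := by
  rw [← variance_id_map hX.aemeasurable, h, variance_id_gaussianReal, Real.coe_toNNReal _ hv]

/-- The innovation variance over a gap `t` is what an AR(1) step with coefficient `φ ^ t` needs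
to preserve the stationary variance `σ ^ 2 / (1 - φ ^ 2)`. -/
lemma variance_of_map_eq_gaussianReal_gap (hX : Measurable X) {σ φ t : ℝ} (hφ0 : 0 < φ)
    (hφ1 : φ < 1) (ht : 0 ≤ t)
    (h : P.map X = gaussianReal 0 (σ ^ 2 * (1 - φ ^ (2 * t)) / (1 - φ ^ 2)).toNNReal) :
    Var[X; P] = (1 - (φ ^ t) ^ 2) * (σ ^ 2 / (1 - φ ^ 2)) := by
  have hpow : φ ^ (2 * t) = (φ ^ t) ^ 2 := by
    rw [mul_comm, Real.rpow_mul hφ0.le, Real.rpow_two]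
  have hsq_le : (φ ^ t) ^ 2 ≤ 1 :=
    pow_le_one₀ (by positivity) (Real.rpow_le_one hφ0.le hφ1.le ht)
  rw [variance_of_map_eq_gaussianReal_toNNReal hX _ h, hpow]
  · ring
  · rw [hpow]
    exact div_nonneg (mul_nonneg (sq_nonneg σ) (by linarith)) (by nlinarith)

end GaussianNoise

/-- A time-varying AR(1) recursion driven by `η`, indexed from `1` (`x 0` is unconstrained). -/
structure IsAR1 {Ω : Type*} (a : ℕ → ℝ) (η x : ℕ → Ω → ℝ) : Prop where
  one : x 1 = η 1
  succ : ∀ n, 1 ≤ n → x (n + 1) = fun ω => a (n + 1) * x n ω + η (n + 1) ω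

namespace IsAR1

variable {Ω : Type*} {a : ℕ → ℝ} {η x : ℕ → Ω → ℝ}

theorem measurable_iSup_comap (hx : IsAR1 a η x) :
    ∀ n, 1 ≤ n → Measurable[⨆ k ∈ Set.Iic n, (borel ℝ).comap (η k)] (x n) := by
  intro n hn
  induction n, hn using Nat.le_induction with
  | base =>
    rw [hx.one]
    exact Measurable.of_comap_le (le_biSup (fun k => (borel ℝ).comap (η k)) (Set.mem_Iic.2 le_rfl))
  | succ n hn ih =>
    have hmono : ⨆ k ∈ Set.Iic n, (borel ℝ).comap (η k)
        ≤ ⨆ k ∈ Set.Iic (n + 1), (borel ℝ).comap (η k) :=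
      biSup_mono fun k hk => Set.Iic_subset_Iic.2 n.le_succ hk
    have hnew : Measurable[⨆ k ∈ Set.Iic (n + 1), (borel ℝ).comap (η k)] (η (n + 1)) :=
      Measurable.of_comap_le (le_biSup (fun k => (borel ℝ).comap (η k)) (Set.mem_Iic.2 le_rfl))
    rw [hx.succ n hn]
    exact ((ih.mono hmono le_rfl).const_mul _).add hnew

variable [MeasurableSpace Ω] {P : Measure Ω}

theorem indepFun (hx : IsAR1 a η x) (hmeas : ∀ n, Measurable (η n)) (hindep : iIndepFun η P)
    {k n : ℕ} (hk : 1 ≤ k) (hkn : k ≤ n) : IndepFun (x k) (η (n + 1)) P :=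
  hindep.indepFun_of_measurable_iSup_comap hmeas (by simp)
    ((hx.measurable_iSup_comap k hk).mono
      (biSup_mono fun _ hi => Set.Iic_subset_Iic.2 hkn hi) le_rfl)

theorem memLp (hx : IsAR1 a η x) (hη : ∀ n, 1 ≤ n → MemLp (η n) 2 P) :
    ∀ n, 1 ≤ n → MemLp (x n) 2 P := by
  intro n hn
  induction n, hn using Nat.le_induction with
  | base => exact hx.one ▸ hη 1 le_rfl
  | succ n hn ih =>
    rw [hx.succ n hn]
    exact (ih.const_mul _).add (hη (n + 1) (by omega))

theorem variance_succ (hx : IsAR1 a η x) (hmeas : ∀ n, Measurable (η n))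
    (hindep : iIndepFun η P) (hη : ∀ n, 1 ≤ n → MemLp (η n) 2 P) {n : ℕ} (hn : 1 ≤ n) :
    Var[x (n + 1); P] = a (n + 1) ^ 2 * Var[x n; P] + Var[η (n + 1); P] := by
  rw [hx.succ n hn, IndepFun.variance_fun_add ((hx.memLp hη n hn).const_mul _)
    (hη (n + 1) (by omega)) ((hx.indepFun hmeas hindep hn le_rfl).comp (measurable_const_mul _)
      measurable_id), variance_const_mul]

theorem covariance_succ [IsFiniteMeasure P] (hx : IsAR1 a η x) (hmeas : ∀ n, Measurable (η n))
    (hindep : iIndepFun η P) (hη : ∀ n, 1 ≤ n → MemLp (η n) 2 P) {k n : ℕ} (hk : 1 ≤ k)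
    (hkn : k ≤ n) : cov[x k, x (n + 1); P] = a (n + 1) * cov[x k, x n; P] := by
  have hxk := hx.memLp hη k hk
  rw [hx.succ n (hk.trans hkn)]
  change cov[x k, (fun ω => a (n + 1) * x n ω) + η (n + 1); P] = _
  rw [covariance_add_right hxk ((hx.memLp hη n (hk.trans hkn)).const_mul _)
    (hη (n + 1) (by omega)), covariance_const_mul_right,
    (hx.indepFun hmeas hindep hk hkn).covariance_eq_zero hxk (hη (n + 1) (by omega)), add_zero]

theorem variance_eq_of_stationary (hx : IsAR1 a η x) (hmeas : ∀ n, Measurable (η n))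
    (hindep : iIndepFun η P) (hη : ∀ n, 1 ≤ n → MemLp (η n) 2 P) {s : ℝ} (h₁ : Var[η 1; P] = s)
    (hsucc : ∀ n, 1 ≤ n → Var[η (n + 1); P] = (1 - a (n + 1) ^ 2) * s) :
    ∀ n, 1 ≤ n → Var[x n; P] = s := by
  intro n hn
  induction n, hn using Nat.le_induction with
  | base => rw [hx.one, h₁]
  | succ n hn ih =>
    rw [hx.variance_succ hmeas hindep hη hn, ih, hsucc n hn]
    ring

theorem covariance_add [IsFiniteMeasure P] (hx : IsAR1 a η x) (hmeas : ∀ n, Measurable (η n))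
    (hindep : iIndepFun η P) (hη : ∀ n, 1 ≤ n → MemLp (η n) 2 P) {j : ℕ} (hj : 1 ≤ j) (m : ℕ) :
    cov[x j, x (j + m); P] = (∏ i ∈ Ioc j (j + m), a i) * Var[x j; P] := by
  induction m with
  | zero => simp [covariance_self (hx.memLp hη j hj).aemeasurable]
  | succ m ih =>
    rw [← add_assoc, hx.covariance_succ hmeas hindep hη hj (by omega), ih,
      prod_Ioc_succ_top (by omega)]
    ring

end IsAR1

theorem irsv_sum_logvol_variance_general
    {Ω : Type*} [MeasurableSpace Ω] (P : Measure Ω) [IsProbabilityMeasure P]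
    (μ σ φ : ℝ) (hφ0 : 0 < φ) (hφ1 : φ < 1)
    (g : ℕ → ℝ) (hg : ∀ j, 2 ≤ j → 0 < g j)
    (η : ℕ → Ω → ℝ) (hmeas : ∀ j, Measurable (η j))
    (hindep : iIndepFun η P)
    (hlaw1 : Measure.map (η 1) P = gaussianReal 0 (σ ^ 2 / (1 - φ ^ 2)).toNNReal)
    (hlawj : ∀ j, 2 ≤ j → Measure.map (η j) P
      = gaussianReal 0 (σ ^ 2 * (1 - φ ^ (2 * g j)) / (1 - φ ^ 2)).toNNReal)
    (x : ℕ → Ω → ℝ) (hx1 : x 1 = η 1)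
    (hxrec : ∀ j, 2 ≤ j → x j = fun ω => φ ^ (g j) * x (j - 1) ω + η j ω)
    (h : ℕ → Ω → ℝ) (hh : ∀ j, h j = fun ω => μ + x j ω) :
    ∀ j, 1 ≤ j → ∀ m : ℕ,
      variance (fun ω => h j ω + h (j + m) ω) P
        = 2 * σ ^ 2 * (1 + φ ^ (∑ i ∈ Finset.Icc (j + 1) (j + m), g i)) / (1 - φ ^ 2) := by
  intro j hj m
  set s := σ ^ 2 / (1 - φ ^ 2) with hs
  have hx : IsAR1 (fun n => φ ^ g n) η x := ⟨hx1, fun n hn => hxrec (n + 1) (by omega)⟩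
  have hη : ∀ n, 1 ≤ n → MemLp (η n) 2 P := by
    intro n hn
    obtain rfl | hn2 := hn.eq_or_lt
    · exact memLp_two_of_map_eq_gaussianReal (hmeas 1) hlaw1
    · exact memLp_two_of_map_eq_gaussianReal (hmeas n) (hlawj n hn2)
  have hvar : ∀ n, 1 ≤ n → Var[x n; P] = s :=
    hx.variance_eq_of_stationary hmeas hindep hη
      (variance_of_map_eq_gaussianReal_toNNReal (hmeas 1)
        (div_nonneg (sq_nonneg σ) (by nlinarith)) hlaw1)
      fun n hn => variance_of_map_eq_gaussianReal_gap (hmeas _) hφ0 hφ1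
        (hg (n + 1) (by omega)).le (hlawj (n + 1) (by omega))
  have hcov : cov[x j, x (j + m); P] = φ ^ (∑ i ∈ Icc (j + 1) (j + m), g i) * s := by
    rw [hx.covariance_add hmeas hindep hη hj m, hvar j hj, Icc_add_one_left_eq_Ioc,
      Real.rpow_sum_of_pos hφ0]
  have hxj := hx.memLp hη j hj
  have hxjm := hx.memLp hη (j + m) (by omega)
  calc variance (fun ω => h j ω + h (j + m) ω) P
      = Var[fun ω => 2 * μ + (x j ω + x (j + m) ω); P] := by
        simp only [hh]
        ring_nf
    _ = Var[fun ω => x j ω + x (j + m) ω; P] :=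
        variance_const_add (hxj.add hxjm).aestronglyMeasurable _
    _ = s + 2 * (φ ^ (∑ i ∈ Icc (j + 1) (j + m), g i) * s) + s := by
        rw [variance_fun_add hxj hxjm, hvar j hj, hvar (j + m) (by omega), hcov]
    _ = 2 * σ ^ 2 * (1 + φ ^ (∑ i ∈ Finset.Icc (j + 1) (j + m), g i)) / (1 - φ ^ 2) := by
        rw [hs]; ring

/-- in the IR-SV model, for every `j ≥ 1` and `m ≥ 0`, writing
`ℓ = ∑_{i=j+1}^{j+m} g i`, one has `Var(h j + h (j+m)) = 2σ²(1 + φ^ℓ)/(1 - φ²)`. -/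
theorem irsv_sum_logvol_variance
    {Ω : Type*} [MeasurableSpace Ω] (P : Measure Ω) [IsProbabilityMeasure P]
    (μ σ φ : ℝ) (hσ : 0 < σ) (hφ0 : 0 < φ) (hφ1 : φ < 1)
    (g : ℕ → ℝ) (hg : ∀ j, 2 ≤ j → 0 < g j)
    (η : ℕ → Ω → ℝ) (hmeas : ∀ j, Measurable (η j))
    (hindep : iIndepFun η P)
    (hlaw1 : Measure.map (η 1) P = gaussianReal 0 (σ ^ 2 / (1 - φ ^ 2)).toNNReal)
    (hlawj : ∀ j, 2 ≤ j → Measure.map (η j) P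
      = gaussianReal 0 (σ ^ 2 * (1 - φ ^ (2 * g j)) / (1 - φ ^ 2)).toNNReal)
    (x : ℕ → Ω → ℝ) (hx1 : x 1 = η 1)
    (hxrec : ∀ j, 2 ≤ j → x j = fun ω => φ ^ (g j) * x (j - 1) ω + η j ω)
    (h : ℕ → Ω → ℝ) (hh : ∀ j, h j = fun ω => μ + x j ω) :
    ∀ j, 1 ≤ j → ∀ m : ℕ,
      variance (fun ω => h j ω + h (j + m) ω) P
        = 2 * σ ^ 2 * (1 + φ ^ (∑ i ∈ Finset.Icc (j + 1) (j + m), g i)) / (1 - φ ^ 2) :=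
  irsv_sum_logvol_variance_general P μ σ φ hφ0 hφ1 g hg η hmeas hindep hlaw1 hlawj x hx1 hxrec h hh
end

section
/- Let 0 < α < 1, let C > 0, and let g_2, g_3, … be positive real gap times (real powers α^x = exp(x·log α)). On a probability space, let x_1 be a square-integrable random variable with E[x_1] = 0 and Var(x_1) = C, and for j ≥ 2 let η_j be square-integrable random variables with E[η_j] = 0 and Var(η_j) = C(1 − α^{2 g_j}), such that the η_j are pairwise uncorrelated, each η_j is uncorrelated with x_1, and η_j is uncorrelated with η_k for k ≠ j. Define x_j = α^{g_j} x_{j−1} + η_j for j ≥ 2. Then for every j ≥ 1, Var(x_j) = C, and for every j ≥ 1 and m ≥ 0, writing ℓ = Σ_{i=j+1}^{j+m} g_i, Cov(x_j, x_{j+m}) = C·α^{ℓ}; hence (x_j) is a weakly (second-order) stationary process. -/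
open MeasureTheory ProbabilityTheory Real Finset

/-- Covariance of two real random variables: `Cov(X,Y) = E[(X - E X)(Y - E Y)]`. -/
noncomputable def cov {Ω : Type*} [MeasurableSpace Ω] (P : Measure Ω) (X Y : Ω → ℝ) : ℝ :=
  ∫ ω, (X ω - ∫ a, X a ∂P) * (Y ω - ∫ a, Y a ∂P) ∂P

/-!
Covariance is bilinear, so along `x (j + 1) = c (j + 1) * x j + η (j + 1)`, with each innovation
uncorrelated with the past, `Var(x (j + 1)) = c (j + 1)² Var(x j) + Var(η (j + 1))` and
`Cov(x j, x (j + m + 1)) = c (j + m + 1) Cov(x j, x (j + m))`. Innovation variances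
`(1 - c k²) V` therefore keep `Var(x j) = V`, and the covariances are `V` times products of the
coefficients, which for `c k = α ^ g k` is `V α ^ ∑ g`.
-/

section ARRecursion

variable {Ω : Type*} [MeasurableSpace Ω] {P : Measure Ω}

lemma cov_eq_covariance (X Y : Ω → ℝ) : cov P X Y = cov[X, Y; P] := rfl

lemma variance_const_mul_add_of_covariance_eq_zero [IsFiniteMeasure P] {X ε : Ω → ℝ}
    (hX : MemLp X 2 P) (hε : MemLp ε 2 P) (h : cov[X, ε; P] = 0) (a : ℝ) :
    Var[fun ω => a * X ω + ε ω; P] = a ^ 2 * Var[X; P] + Var[ε; P] := by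
  rw [variance_fun_add (hX.const_mul a) hε, covariance_const_mul_left, h, variance_const_mul]
  ring

lemma covariance_const_mul_add_right_of_covariance_eq_zero [IsFiniteMeasure P]
    {X Y ε : Ω → ℝ} (hX : MemLp X 2 P) (hY : MemLp Y 2 P) (hε : MemLp ε 2 P)
    (h : cov[Y, ε; P] = 0) (a : ℝ) :
    cov[Y, fun ω => a * X ω + ε ω; P] = a * cov[Y, X; P] := by
  rw [show (fun ω => a * X ω + ε ω) = (fun ω => a * X ω) + ε from rfl,
    covariance_add_right hY (hX.const_mul a) hε, covariance_const_mul_right, h, add_zero]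

variable {c : ℕ → ℝ} {x η : ℕ → Ω → ℝ} {n : ℕ}
  (hrec : ∀ j, n ≤ j → x (j + 1) = fun ω => c (j + 1) * x j ω + η (j + 1) ω)
  (hx : MemLp (x n) 2 P) (hη : ∀ k, n < k → MemLp (η k) 2 P)
include hrec hx hη

lemma memLp_two_of_ar : ∀ j, n ≤ j → MemLp (x j) 2 P := by
  intro j hj
  induction j, hj using Nat.le_induction with
  | base => exact hx
  | succ j hj ih => rw [hrec j hj]; exact (ih.const_mul _).add (hη _ (by omega))

lemma covariance_ar_innovation_eq_zero [IsFiniteMeasure P]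
    (hxη : ∀ k, n < k → cov[x n, η k; P] = 0)
    (hηη : ∀ j k, n < j → n < k → j ≠ k → cov[η j, η k; P] = 0) :
    ∀ j k, n ≤ j → j < k → cov[x j, η k; P] = 0 := by
  intro j k hj hjk
  induction j, hj using Nat.le_induction with
  | base => exact hxη k hjk
  | succ j hj ih =>
    rw [hrec j hj, covariance_comm, covariance_const_mul_add_right_of_covariance_eq_zero
      (memLp_two_of_ar hrec hx hη j hj) (hη k (by omega)) (hη _ (by omega))
      (hηη k _ (by omega) (by omega) (by omega)), covariance_comm, ih (by omega), mul_zero]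

lemma variance_ar_eq [IsFiniteMeasure P] {V : ℝ} (hxV : Var[x n; P] = V)
    (hηV : ∀ k, n < k → Var[η k; P] = (1 - c k ^ 2) * V)
    (huncorr : ∀ j, n ≤ j → cov[x j, η (j + 1); P] = 0) :
    ∀ j, n ≤ j → Var[x j; P] = V := by
  intro j hj
  induction j, hj using Nat.le_induction with
  | base => exact hxV
  | succ j hj ih =>
    rw [hrec j hj, variance_const_mul_add_of_covariance_eq_zero (memLp_two_of_ar hrec hx hη j hj)
      (hη _ (by omega)) (huncorr j hj), ih, hηV _ (by omega)]
    ring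

lemma covariance_ar_eq_prod_mul_variance [IsFiniteMeasure P]
    (huncorr : ∀ j k, n ≤ j → j < k → cov[x j, η k; P] = 0) :
    ∀ j, n ≤ j → ∀ m,
      cov[x j, x (j + m); P] = (∏ i ∈ Icc (j + 1) (j + m), c i) * Var[x j; P] := by
  intro j hj m
  have hxj := memLp_two_of_ar hrec hx hη j hj
  induction m with
  | zero => simp [covariance_self hxj.aemeasurable]
  | succ m ih =>
    rw [← add_assoc, hrec _ (by omega), covariance_const_mul_add_right_of_covariance_eq_zero
      (memLp_two_of_ar hrec hx hη _ (by omega)) hxj (hη _ (by omega))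
      (huncorr _ _ hj (by omega)), ih, prod_Icc_succ_top (by omega)]
    ring

end ARRecursion

theorem irarch_gap_time_ar_weak_stationarity_general
    {Ω : Type*} [MeasurableSpace Ω] (P : Measure Ω) [IsProbabilityMeasure P]
    (α C : ℝ) (hα0 : 0 < α)
    (g : ℕ → ℝ)
    (x η : ℕ → Ω → ℝ)
    (hx1L2 : MemLp (x 1) 2 P)
    (hx1var : variance (x 1) P = C)
    (hηL2 : ∀ j, 2 ≤ j → MemLp (η j) 2 P)
    (hηvar : ∀ j, 2 ≤ j → variance (η j) P = C * (1 - α ^ (2 * g j)))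
    (hηuncorr : ∀ j k, 2 ≤ j → 2 ≤ k → j ≠ k → cov P (η j) (η k) = 0)
    (hx1uncorr : ∀ j, 2 ≤ j → cov P (x 1) (η j) = 0)
    (hxrec : ∀ j, 2 ≤ j → x j = fun ω => α ^ (g j) * x (j - 1) ω + η j ω) :
    (∀ j, 1 ≤ j → variance (x j) P = C)
    ∧ (∀ j, 1 ≤ j → ∀ m : ℕ,
        cov P (x j) (x (j + m)) = C * α ^ (∑ i ∈ Finset.Icc (j + 1) (j + m), g i)) := by
  have hrec : ∀ j, 1 ≤ j → x (j + 1) = fun ω => α ^ g (j + 1) * x j ω + η (j + 1) ω :=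
    fun j _ => by simpa using hxrec (j + 1) (by omega)
  have huncorr :=
    covariance_ar_innovation_eq_zero (c := fun j => α ^ g j) hrec hx1L2 hηL2 hx1uncorr hηuncorr
  have hvar : ∀ j, 1 ≤ j → Var[x j; P] = C := by
    refine variance_ar_eq (c := fun j => α ^ g j) hrec hx1L2 hηL2 hx1var (fun k hk => ?_)
      (fun j hj => huncorr j _ hj (by omega))
    have hsq : α ^ (2 * g k) = (α ^ g k) ^ 2 := by
      rw [← rpow_mul_natCast hα0.le, Nat.cast_ofNat, mul_comm]
    rw [hηvar k hk, hsq, mul_comm]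
  refine ⟨hvar, fun j hj m => ?_⟩
  rw [cov_eq_covariance,
    covariance_ar_eq_prod_mul_variance (c := fun j => α ^ g j) hrec hx1L2 hηL2 huncorr j hj m,
    hvar j hj, rpow_sum_of_pos hα0, mul_comm]

/-- second-order stationarity for the gap-time AR recursion, the content of
the IR-ARCH(1) stationarity proposition: let `0 < α < 1`, `C > 0`, positive gap times
`g j` for `j ≥ 2`, `x 1` square-integrable with mean `0` and variance `C`, and for `j ≥ 2`
square-integrable `η j` with mean `0`, variance `C(1 - α^{2 g j})`, pairwise uncorrelated and
uncorrelated with `x 1`. Define `x j = α^{g j} x (j-1) + η j` for `j ≥ 2`. Then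
`Var(x j) = C` for all `j ≥ 1`, and for all `j ≥ 1`, `m ≥ 0`, with
`ℓ = ∑_{i=j+1}^{j+m} g i`, `Cov(x j, x (j+m)) = C·α^ℓ`; hence `(x j)` is weakly
stationary. -/
theorem irarch_gap_time_ar_weak_stationarity
    {Ω : Type*} [MeasurableSpace Ω] (P : Measure Ω) [IsProbabilityMeasure P]
    (α C : ℝ) (hα0 : 0 < α) (hα1 : α < 1) (hC : 0 < C)
    (g : ℕ → ℝ) (hg : ∀ j, 2 ≤ j → 0 < g j)
    (x η : ℕ → Ω → ℝ)
    (hx1L2 : MemLp (x 1) 2 P)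
    (hx1mean : ∫ ω, x 1 ω ∂P = 0)
    (hx1var : variance (x 1) P = C)
    (hηL2 : ∀ j, 2 ≤ j → MemLp (η j) 2 P)
    (hηmean : ∀ j, 2 ≤ j → ∫ ω, η j ω ∂P = 0)
    (hηvar : ∀ j, 2 ≤ j → variance (η j) P = C * (1 - α ^ (2 * g j)))
    (hηuncorr : ∀ j k, 2 ≤ j → 2 ≤ k → j ≠ k → cov P (η j) (η k) = 0)
    (hx1uncorr : ∀ j, 2 ≤ j → cov P (x 1) (η j) = 0)
    (hxrec : ∀ j, 2 ≤ j → x j = fun ω => α ^ (g j) * x (j - 1) ω + η j ω) :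
    (∀ j, 1 ≤ j → variance (x j) P = C)
    ∧ (∀ j, 1 ≤ j → ∀ m : ℕ,
        cov P (x j) (x (j + m)) = C * α ^ (∑ i ∈ Finset.Icc (j + 1) (j + m), g i)) :=
  irarch_gap_time_ar_weak_stationarity_general P α C hα0 g x η hx1L2 hx1var hηL2 hηvar hηuncorr
    hx1uncorr hxrec
end
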